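/- arXiv:2102.04386 — 2 statements merged into one kernel-verified Lean document; each statement's English description precedes it below -/
import Mathlib

section
/- Composition of spans of finite sets corresponds to matrix multiplication: if a span X ← A → Y is encoded by the matrix M with M(y,x) = |{a ∈ A : a maps to x and y}|, then the pullback composition of two spans is encoded by the product of their matrices. -/
/-- Sorts the composite by the common image `y` of its two legs in the middle set. -/
def pullbackFiberEquivSigma {X Y Z A B : Type} (f : A → X) (g : A → Y) (h : B → Y) (k : B → Z)
    (x : X) (z : Z) :
    {p : {p : A × B // g p.1 = h p.2} // f p.1.1 = x ∧ k p.1.2 = z} ≃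
      Σ y : Y, {b : B // h b = y ∧ k b = z} × {a : A // f a = x ∧ g a = y} where
  toFun p := ⟨g p.1.1.1, ⟨p.1.1.2, p.1.2.symm, p.2.2⟩, ⟨p.1.1.1, p.2.1, rfl⟩⟩
  invFun := fun ⟨_, ⟨b, hby, hbz⟩, ⟨a, hax, hay⟩⟩ => ⟨⟨(a, b), hay.trans hby.symm⟩, hax, hbz⟩
  left_inv _ := rfl
  right_inv := by
    rintro ⟨y, ⟨b, hby, hbz⟩, ⟨a, hax, rfl⟩⟩
    rfl

theorem span_comp_eq_matrix_mul_general
    {X Y Z A B : Type} [Fintype Y] [Fintype A] [Fintype B]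
    [DecidableEq X] [DecidableEq Y] [DecidableEq Z]
    (f : A → X) (g : A → Y) (h : B → Y) (k : B → Z) (x : X) (z : Z) :
    Fintype.card {p : {p : A × B // g p.1 = h p.2} // f p.1.1 = x ∧ k p.1.2 = z} =
      ∑ y : Y,
        Fintype.card {b : B // h b = y ∧ k b = z} *
          Fintype.card {a : A // f a = x ∧ g a = y} := by
  rw [Fintype.card_congr (pullbackFiberEquivSigma f g h k x z), Fintype.card_sigma]
  simp only [Fintype.card_prod]

/-- Composition of spans of finite sets corresponds to matrix multiplication:
the fiber-cardinality matrix of the pullback composite of two spans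
`X ← A → Y` and `Y ← B → Z` is the product of their fiber-cardinality
matrices. -/
theorem span_comp_eq_matrix_mul
    {X Y Z A B : Type} [Fintype X] [Fintype Y] [Fintype Z] [Fintype A] [Fintype B]
    [DecidableEq X] [DecidableEq Y] [DecidableEq Z]
    (f : A → X) (g : A → Y) (h : B → Y) (k : B → Z) (x : X) (z : Z) :
    Fintype.card {p : {p : A × B // g p.1 = h p.2} // f p.1.1 = x ∧ k p.1.2 = z} =
      ∑ y : Y,
        Fintype.card {b : B // h b = y ∧ k b = z} *
          Fintype.card {a : A // f a = x ∧ g a = y} :=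
  span_comp_eq_matrix_mul_general f g h k x z
end

section
/- Cascade identity for generalized controlled-nots: let X, Y be finite index sets and x ∉ Y, x ∉ X, y ∉ X ∪ Y ∪ {x}. Then G(X,x) ∘ G({x} ∪ Y, y) = G(X ∪ Y, y) ∘ G({x} ∪ Y, y) ∘ G(X,x) as maps 𝔽₂ⁿ → 𝔽₂ⁿ. -/
/-- The generalized controlled-not gate `G(X,x)` on `𝔽₂ⁿ`: it adds the product
of the coordinates indexed by `X` to coordinate `x`. -/
def gcnotGate {n : ℕ} (X : Finset (Fin n)) (x : Fin n) (v : Fin n → ZMod 2) :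
    Fin n → ZMod 2 :=
  Function.update v x (v x + ∏ i ∈ X, v i)

/-!
Write `a = v x`, `b = v y`, `P = ∏_{X} v` and `Q = ∏_{Y} v`. None of the gates involved changes
a coordinate in `X ∪ Y`, so `P` and `Q` stay fixed throughout. Both sides send `v` to the vector
with `x ↦ a + P` and `y ↦ b + a Q`: on the right, coordinate `y` first becomes `b + (a + P) Q`,
and the last gate adds `∏_{X ∪ Y} v = P Q` (coordinates are idempotent in `𝔽₂`), which cancels
`P Q` in characteristic two.
-/

theorem Finset.prod_union_of_isIdempotentElem {ι M : Type*} [CommMonoid M] [DecidableEq ι]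
    {s t : Finset ι} {f : ι → M} (hf : ∀ i ∈ s ∩ t, IsIdempotentElem (f i)) :
    ∏ i ∈ s ∪ t, f i = (∏ i ∈ s, f i) * ∏ i ∈ t, f i := by
  have hinter : (∏ i ∈ s ∩ t, f i) * ∏ i ∈ s ∩ t, f i = ∏ i ∈ s ∩ t, f i := by
    rw [← prod_mul_distrib]
    exact prod_congr rfl hf
  rw [← prod_union_inter, ← prod_sdiff (inter_subset_left.trans subset_union_left), mul_assoc,
    hinter]

section gcnotGate

variable {n : ℕ} (X : Finset (Fin n)) {x : Fin n} (v : Fin n → ZMod 2)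

theorem gcnotGate_apply_self : gcnotGate X x v x = v x + ∏ i ∈ X, v i :=
  Function.update_self ..

theorem gcnotGate_apply_of_ne {i : Fin n} (h : i ≠ x) : gcnotGate X x v i = v i :=
  Function.update_of_ne h ..

theorem prod_gcnotGate_of_notMem {S : Finset (Fin n)} (h : x ∉ S) :
    ∏ i ∈ S, gcnotGate X x v i = ∏ i ∈ S, v i :=
  Finset.prod_update_of_notMem h ..

end gcnotGate

/-- Cascade identity for generalized controlled-nots: if `x ∉ X`, `x ∉ Y` and
`y ∉ X ∪ Y ∪ {x}`, then
`G(X,x) ∘ G({x} ∪ Y, y) = G(X ∪ Y, y) ∘ G({x} ∪ Y, y) ∘ G(X,x)`. -/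
theorem gcnot_cascade (n : ℕ) (X Y : Finset (Fin n)) (x y : Fin n)
    (hxX : x ∉ X) (hxY : x ∉ Y) (hy : y ∉ X ∪ Y ∪ {x}) :
    gcnotGate X x ∘ gcnotGate (insert x Y) y =
      gcnotGate (X ∪ Y) y ∘ gcnotGate (insert x Y) y ∘ gcnotGate X x := by
  simp only [Finset.mem_union, Finset.mem_singleton, not_or] at hy
  obtain ⟨⟨hyX, hyY⟩, hyx⟩ := hy
  have hxXY : x ∉ X ∪ Y := by simp [hxX, hxY]
  have hyXY : y ∉ X ∪ Y := by simp [hyX, hyY]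
  funext v i
  simp only [Function.comp_apply]
  rcases eq_or_ne i x with rfl | hix
  · simp only [gcnotGate_apply_self, gcnotGate_apply_of_ne _ _ (Ne.symm hyx),
      prod_gcnotGate_of_notMem _ _ hyX]
  rcases eq_or_ne i y with rfl | hiy
  · have hXY : ∏ j ∈ X ∪ Y, v j = (∏ j ∈ X, v j) * ∏ j ∈ Y, v j :=
      Finset.prod_union_of_isIdempotentElem fun j _ ↦ by
        rw [IsIdempotentElem, ← sq, ZMod.pow_card]
    simp only [gcnotGate_apply_self, gcnotGate_apply_of_ne _ _ hix,
      prod_gcnotGate_of_notMem _ _ hyXY, prod_gcnotGate_of_notMem _ _ hxXY,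
      Finset.prod_insert hxY, prod_gcnotGate_of_notMem _ _ hxY, hXY]
    linear_combination
      -(∏ j ∈ X, v j) * (∏ j ∈ Y, v j) * (CharTwo.two_eq_zero : (2 : ZMod 2) = 0)
  · simp only [gcnotGate_apply_of_ne _ _ hix, gcnotGate_apply_of_ne _ _ hiy]
end
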